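/- The G-sets X̄ and Ȳ are isomorphic as B-sets, i.e. there is a B-equivariant bijection X̄ → Ȳ. -/

import Mathlib

open Matrix CategoryTheory CategoryTheory.Limits Pointwise
open scoped LinearAlgebra.Projectivization

noncomputable section

/-- The projective line over a field `K`, as the projectivization of `K²`. -/
abbrev P1 (K : Type*) [Field K] := ℙ K (Fin 2 → K)

namespace P1

variable {K : Type*} [Field K]

lemma mulVec_ne_zero (g : GL (Fin 2) K) {v : Fin 2 → K} (hv : v ≠ 0) :
    (g : Matrix (Fin 2) (Fin 2) K) *ᵥ v ≠ 0 := by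
  intro h
  apply hv
  have h2 := congrArg (fun w => ((g⁻¹ : GL (Fin 2) K) : Matrix (Fin 2) (Fin 2) K) *ᵥ w) h
  simp only [Matrix.mulVec_mulVec] at h2
  rw [Units.inv_mul, Matrix.one_mulVec, Matrix.mulVec_zero] at h2
  exact h2

/-- The natural action of `GL₂(K)` on the projective line `ℙ¹(K)`. -/
instance : SMul (GL (Fin 2) K) (P1 K) :=
  ⟨fun g x => Projectivization.mk K ((g : Matrix (Fin 2) (Fin 2) K) *ᵥ x.rep)
    (mulVec_ne_zero g x.rep_nonzero)⟩

lemma smul_mk (g : GL (Fin 2) K) (v : Fin 2 → K) (hv : v ≠ 0) :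
    g • Projectivization.mk K v hv
      = Projectivization.mk K ((g : Matrix (Fin 2) (Fin 2) K) *ᵥ v) (mulVec_ne_zero g hv) := by
  show Projectivization.mk K _ _ = _
  rw [Projectivization.mk_eq_mk_iff]
  obtain ⟨a, ha⟩ := Projectivization.exists_smul_eq_mk_rep K v hv
  exact ⟨a, by rw [← ha]; simp [Matrix.mulVec_smul]⟩

instance : MulAction (GL (Fin 2) K) (P1 K) where
  one_smul x := by
    induction x using Projectivization.ind with
    | h v hv => rw [smul_mk]; simp
  mul_smul g h x := by
    induction x using Projectivization.ind with
    | h v hv =>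
      rw [smul_mk, smul_mk, smul_mk, Projectivization.mk_eq_mk_iff]
      exact ⟨1, by simp only [one_smul, Units.val_mul, Matrix.mulVec_mulVec]⟩

end P1

section Setup

variable (F : Type*) [Field F] (F' : Type*) [Field F'] [Algebra F F']

/-- The inclusion `GL₂(F) → GL₂(F')` induced by the inclusion `F ⊆ F'`. -/
def glMap : GL (Fin 2) F →* GL (Fin 2) F' :=
  Matrix.GeneralLinearGroup.map (algebraMap F F')

/-- The scalar matrices, as a homomorphism `Fˣ →* GL₂(F)`. -/
def scalarGL : Fˣ →* GL (Fin 2) F :=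
  Units.map (Matrix.scalar (Fin 2)).toMonoidHom

variable {F F'}

/-- The (semilinear) action of a field automorphism `σ ∈ Gal(F'/F)` on `ℙ¹(F')`. -/
def sigmaPt (σ : F' ≃ₐ[F] F') (x : P1 F') : P1 F' :=
  Projectivization.mk F' (fun i => σ (x.rep i))
    (fun h => x.rep_nonzero (funext fun i => σ.injective (by simpa using congrFun h i)))

variable (F F')

/-- The set of `F`-rational points `ℙ¹(F) ⊆ ℙ¹(F')`. -/
def ratPts : Set (P1 F') :=
  Set.range (fun x : P1 F =>
    Projectivization.mk F' (fun i => algebraMap F F' (x.rep i))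
      (fun h => x.rep_nonzero (funext fun i =>
        (algebraMap F F').injective (by simpa using congrFun h i))))

/-- A Borel subgroup of `GL₂(F)`: the stabilizer of a point `∞ ∈ ℙ¹(F)`. -/
def Bsub (xoo : P1 F) : Subgroup (GL (Fin 2) F) :=
  MulAction.stabilizer (GL (Fin 2) F) xoo

/-- A split maximal torus of `GL₂(F)`: the pointwise stabilizer of `{0, ∞} ⊆ ℙ¹(F)`. -/
def Tsub (x0 xoo : P1 F) : Subgroup (GL (Fin 2) F) :=
  MulAction.stabilizer (GL (Fin 2) F) x0 ⊓ MulAction.stabilizer (GL (Fin 2) F) xoo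

/-- The setwise stabilizer of `{0, ∞} ⊆ ℙ¹(F)` in `GL₂(F)`. -/
def Nsub (x0 xoo : P1 F) : Subgroup (GL (Fin 2) F) :=
  MulAction.stabilizer (GL (Fin 2) F) ({x0, xoo} : Set (P1 F))

/-- A nonsplit maximal torus of `GL₂(F)`: the stabilizer in `GL₂(F)` of a point
`P ∈ ℙ¹(F') ∖ ℙ¹(F)`. -/
def T'sub (P : P1 F') : Subgroup (GL (Fin 2) F) :=
  (MulAction.stabilizer (GL (Fin 2) F') P).comap (glMap F F')

/-- The setwise stabilizer in `GL₂(F)` of the pair `{P, σP}`, for `P ∈ ℙ¹(F') ∖ ℙ¹(F)`. -/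
def N'sub (σ : F' ≃ₐ[F] F') (P : P1 F') : Subgroup (GL (Fin 2) F) :=
  (MulAction.stabilizer (GL (Fin 2) F') ({P, sigmaPt σ P} : Set (P1 F'))).comap (glMap F F')

end Setup

section Bar

variable {F : Type*} [Field F] {F' : Type*} [Field F'] [Algebra F F']

lemma sigmaPt_mk (σ : F' ≃ₐ[F] F') (v : Fin 2 → F') (hv : v ≠ 0) :
    sigmaPt σ (Projectivization.mk F' v hv)
      = Projectivization.mk F' (fun i => σ (v i))
          (fun h => hv (funext fun i => σ.injective (by simpa using congrFun h i))) := by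
  unfold sigmaPt
  rw [Projectivization.mk_eq_mk_iff]
  obtain ⟨a, ha⟩ := Projectivization.exists_smul_eq_mk_rep F' v hv
  refine ⟨Units.map (σ : F' →* F') a, funext fun i => ?_⟩
  rw [← ha]
  simp [Units.smul_def]

lemma glMap_coe_apply (g : GL (Fin 2) F) (i j : Fin 2) :
    (glMap F F' g : Matrix (Fin 2) (Fin 2) F') i j
      = algebraMap F F' ((g : Matrix (Fin 2) (Fin 2) F) i j) := rfl

lemma glMap_mulVec_sigma (σ : F' ≃ₐ[F] F') (g : GL (Fin 2) F) (v : Fin 2 → F') :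
    ((glMap F F' g : Matrix (Fin 2) (Fin 2) F') *ᵥ fun i => σ (v i))
      = fun i => σ (((glMap F F' g : Matrix (Fin 2) (Fin 2) F') *ᵥ v) i) := by
  funext i
  simp only [Matrix.mulVec, dotProduct, map_sum]
  refine Finset.sum_congr rfl fun j _ => ?_
  rw [_root_.map_mul, glMap_coe_apply, AlgEquiv.commutes]

lemma sigmaPt_glSmul (σ : F' ≃ₐ[F] F') (g : GL (Fin 2) F) (x : P1 F') :
    sigmaPt σ (glMap F F' g • x) = glMap F F' g • sigmaPt σ x := by
  induction x using Projectivization.ind with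
  | h v hv =>
    rw [P1.smul_mk, sigmaPt_mk, sigmaPt_mk, P1.smul_mk]
    rw [Projectivization.mk_eq_mk_iff]
    exact ⟨1, by simp [glMap_mulVec_sigma σ g v]⟩

end Bar

/-- The `G`-set `X̄`: unordered pairs of distinct points of `ℙ¹(F)`, plus one added point. -/
def XbarSet (F : Type*) [Field F] := {z : Sym2 (P1 F) // ¬ z.IsDiag} ⊕ Unit

/-- The action of `GL₂(F)` on `X̄`. -/
def actXbar {F : Type*} [Field F] (g : GL (Fin 2) F) : XbarSet F → XbarSet F
  | Sum.inl z => Sum.inl ⟨Sym2.map (g • ·) z.1, by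
      obtain ⟨w, hw⟩ := z
      induction w using Sym2.ind with
      | _ a b =>
        simpa [Sym2.map_pair_eq, Sym2.mk_isDiag_iff,
          (MulAction.injective g).eq_iff] using hw⟩
  | Sum.inr u => Sum.inr u

/-- The `G`-set `Ȳ = ℙ¹(F')/⟨σ⟩`: the quotient of `ℙ¹(F')` by the action of `σ`. -/
def YbarSet {F : Type*} [Field F] {F' : Type*} [Field F'] [Algebra F F']
    (σ : F' ≃ₐ[F] F') := Quot (fun x y : P1 F' => sigmaPt σ x = y)

/-- The action of `GL₂(F)` on `Ȳ`. -/
def actYbar {F : Type*} [Field F] {F' : Type*} [Field F'] [Algebra F F']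
    (σ : F' ≃ₐ[F] F') (g : GL (Fin 2) F) : YbarSet σ → YbarSet σ :=
  Quot.map (fun y => glMap F F' g • y)
    (fun a b hab => by rw [← hab]; exact sigmaPt_glSmul σ g a)

/-! After moving `∞` to `[1 : 0]`, the Borel subgroup acts on `ℙ¹(F) = F ∪ {∞}` by the affine
maps `z ↦ (a z + b) / d`. Pick `δ ∈ F' ∖ F` with `δ + σ δ = s ∈ Fˣ`. The bijection sends the
added point to `∞`, a pair `{∞, u}` to the rational point `u`, and a pair `{u, w}` of finite
points to the class of `u + ((w - u) / s) δ`; as `σ` maps this to `w + ((u - w) / s) δ`, the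
order of `u` and `w` does not matter. Writing a point of `F'` as `u + v δ` recovers `{u, u + v s}`,
or `{∞, u}` when `v = 0`. Affine maps defined over `F` commute with `σ` and respect the formula. -/

open OnePoint

lemma MulAction.exists_equiv_smul_of_stabilizer {G X Y Z : Type*} [Group G] [MulAction G X]
    [MulAction G Y] [MulAction G Z] {z : Z} {f : X ≃ Y}
    (hf : ∀ b ∈ stabilizer G z, ∀ x, f (b • x) = b • f x) (g : G) :
    ∃ f' : X ≃ Y, ∀ b ∈ stabilizer G (g • z), ∀ x, f' (b • x) = b • f' x := by
  refine ⟨(toPerm g⁻¹).trans (f.trans (toPerm g)), fun b hb x => ?_⟩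
  have hconj : g⁻¹ * b * g ∈ stabilizer G z := by
    rw [mem_stabilizer_iff] at hb ⊢
    rw [mul_smul, mul_smul, hb, inv_smul_smul]
  simp only [Equiv.trans_apply, toPerm_apply]
  calc g • f (g⁻¹ • b • x) = g • f ((g⁻¹ * b * g) • g⁻¹ • x) := by simp [mul_smul]
    _ = b • g • f (g⁻¹ • x) := by rw [hf _ hconj]; simp [mul_smul]

lemma Matrix.GeneralLinearGroup.apply_one_one_ne_zero {K : Type*} [Field K]
    {g : GL (Fin 2) K} (hg : g 1 0 = 0) : g 1 1 ≠ 0 :=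
  fun hd => g.det_ne_zero (by simp [det_fin_two, hg, hd])

namespace OnePoint

variable {K : Type*} [Field K] [DecidableEq K]

lemma smul_coe_of_apply_one_zero {g : GL (Fin 2) K} (hg : g 1 0 = 0) (k : K) :
    g • (k : OnePoint K) = ((g 0 0 * k + g 0 1) / g 1 1 : K) := by
  simp [smul_some_eq_ite, hg, g.apply_one_one_ne_zero hg]

lemma exists_smul_infty_eq (x : OnePoint K) : ∃ g : GL (Fin 2) K, g • ∞ = x := by
  cases x with
  | infty => exact ⟨1, one_smul _ _⟩
  | coe k =>
    refine ⟨.mkOfDetNeZero !![k, 1; 1, 0] (by simp [det_fin_two]), ?_⟩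
    simp [smul_infty_eq_ite, Matrix.GeneralLinearGroup.mkOfDetNeZero]

end OnePoint

namespace P1

variable {K : Type*} [Field K] [DecidableEq K]

lemma equivProjectivization_symm_smul (g : GL (Fin 2) K) (x : P1 K) :
    (equivProjectivization K).symm (g • x) = g • (equivProjectivization K).symm x := by
  induction x using Projectivization.ind with
  | h v hv =>
    rw [Equiv.smul_def, Equiv.apply_symm_apply, P1.smul_mk, Projectivization.smul_mk]
    congr 2

lemma smul_equivProjectivization (g : GL (Fin 2) K) (c : OnePoint K) :
    g • equivProjectivization K c = equivProjectivization K (g • c) := by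
  apply (equivProjectivization K).symm.injective
  rw [equivProjectivization_symm_smul, Equiv.symm_apply_apply, Equiv.symm_apply_apply]

lemma smul_equivProjectivization_infty_eq_self_iff {g : GL (Fin 2) K} :
    g • equivProjectivization K ∞ = equivProjectivization K ∞ ↔ g 1 0 = 0 := by
  rw [smul_equivProjectivization, (equivProjectivization K).apply_eq_iff_eq,
    smul_infty_eq_self_iff]

end P1

section QuadraticExtension

variable {F F' : Type*} [Field F] [Field F'] [Algebra F F']

def coordEquiv (hdim : Module.finrank F F' = 2) {δ : F'}
    (hδ : δ ∉ Set.range (algebraMap F F')) : F × F ≃ F' :=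
  haveI : FiniteDimensional F F' := Module.finite_of_finrank_eq_succ hdim
  LinearEquiv.toEquiv <| LinearMap.linearEquivOfInjective
    ((Algebra.linearMap F F').coprod (LinearMap.toSpanSingleton F F' δ))
    (by
      refine (injective_iff_map_eq_zero _).2 fun ⟨u, v⟩ h => ?_
      simp only [LinearMap.coprod_apply, Algebra.linearMap_apply,
        LinearMap.toSpanSingleton_apply, Algebra.smul_def] at h
      obtain rfl : v = 0 := by
        by_contra hv
        refine hδ ⟨-u / v, ?_⟩
        rw [map_div₀, map_neg, div_eq_iff (by simpa using hv)]
        linear_combination -h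
      simpa using h)
    (by simp [hdim])

lemma coordEquiv_apply (hdim : Module.finrank F F' = 2) {δ : F'}
    (hδ : δ ∉ Set.range (algebraMap F F')) (p : F × F) :
    coordEquiv hdim hδ p = algebraMap F F' p.1 + algebraMap F F' p.2 * δ := by
  simp [coordEquiv, Algebra.smul_def]

namespace AlgEquiv

variable (σ : F' ≃ₐ[F] F')

lemma apply_apply_eq_self_of_finrank_eq_two (hdim : Module.finrank F F' = 2) (x : F') :
    σ (σ x) = x := by
  have : FiniteDimensional F F' := Module.finite_of_finrank_eq_succ hdim
  have hcard : Fintype.card (F' ≃ₐ[F] F') ≤ 2 := hdim ▸ AlgEquiv.card_le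
  have hsq : σ ^ 2 = 1 := by
    have hpow := pow_card_eq_one (x := σ)
    have hpos := Fintype.card_pos (α := F' ≃ₐ[F] F')
    interval_cases Fintype.card (F' ≃ₐ[F] F')
    · rw [pow_one] at hpow
      rw [hpow, one_pow]
    · exact hpow
  rw [← mul_apply, ← pow_two, hsq, one_apply]

lemma mem_range_of_apply_eq_self (hdim : Module.finrank F F' = 2) (hσ : σ ≠ AlgEquiv.refl)
    {y : F'} (hy : σ y = y) : y ∈ Set.range (algebraMap F F') := by
  by_contra hy'
  refine hσ (AlgEquiv.ext fun z => ?_)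
  obtain ⟨p, rfl⟩ := (coordEquiv hdim hy').surjective z
  simp [coordEquiv_apply, hy]

end AlgEquiv

structure TraceGenerator (σ : F' ≃ₐ[F] F') where
  δ : F'
  s : F
  δ_notMem : δ ∉ Set.range (algebraMap F F')
  s_ne_zero : s ≠ 0
  apply_δ : σ δ = algebraMap F F' s - δ

lemma TraceGenerator.nonempty (hdim : Module.finrank F F' = 2) {σ : F' ≃ₐ[F] F'}
    (hσ : σ ≠ AlgEquiv.refl) : Nonempty (TraceGenerator σ) := by
  obtain ⟨δ, hδ⟩ : ∃ δ, σ δ ≠ δ := by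
    by_contra! h
    exact hσ (AlgEquiv.ext h)
  have hδF : δ ∉ Set.range (algebraMap F F') := fun ⟨a, ha⟩ => hδ (ha ▸ σ.commutes a)
  obtain ⟨s, hs⟩ := σ.mem_range_of_apply_eq_self hdim hσ (y := δ + σ δ) (by
    rw [map_add, σ.apply_apply_eq_self_of_finrank_eq_two hdim, add_comm])
  by_cases h : s = 0
  · -- `σ δ = -δ ≠ δ`, so the characteristic is not 2 and `δ + 1` works with `s = 2`
    have hσδ : σ δ = -δ := by
      rw [h, map_zero] at hs
      linear_combination -hs
    have h2 : (2 : F) ≠ 0 := fun h2 => hδ <| by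
      have : (2 : F') = 0 := by rw [← map_ofNat (algebraMap F F') 2, h2, map_zero]
      linear_combination hσδ - δ * this
    refine ⟨⟨δ + 1, 2, fun ⟨a, ha⟩ => hδF ⟨a - 1, ?_⟩, h2, ?_⟩⟩
    · rw [map_sub, ha, map_one, add_sub_cancel_right]
    · rw [map_add, hσδ, map_one, map_ofNat]
      ring
  · exact ⟨⟨δ, s, hδF, h, by linear_combination -hs⟩⟩

end QuadraticExtension

section Bar

variable {F F' : Type*} [Field F] [Field F'] [Algebra F F']

lemma sigmaPt_equivProjectivization [DecidableEq F'] (σ : F' ≃ₐ[F] F') (z : OnePoint F') :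
    sigmaPt σ (equivProjectivization F' z) = equivProjectivization F' (z.map σ) := by
  cases z with
  | infty =>
    simp only [equivProjectivization_apply_infinity, sigmaPt_mk, map_infty]
    congr 1
    ext i; fin_cases i <;> simp
  | coe z =>
    simp only [equivProjectivization_apply_coe, sigmaPt_mk, map_some]
    congr 1
    ext i; fin_cases i <;> simp

lemma glMap_smul_infty [DecidableEq F'] {g : GL (Fin 2) F} (hg : g 1 0 = 0) :
    glMap F F' g • (∞ : OnePoint F') = ∞ := by
  rw [smul_infty_eq_self_iff, glMap_coe_apply, hg, map_zero]

instance : MulAction (GL (Fin 2) F) (XbarSet F) where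
  smul := actXbar
  one_smul
    | Sum.inl _ => congrArg Sum.inl (Subtype.ext (by simp [Sym2.map_id']))
    | Sum.inr _ => rfl
  mul_smul g h
    | Sum.inl _ => congrArg Sum.inl (Subtype.ext (by simp [Sym2.map_map, mul_smul]))
    | Sum.inr _ => rfl

instance (σ : F' ≃ₐ[F] F') : MulAction (GL (Fin 2) F) (YbarSet σ) where
  smul := actYbar σ
  one_smul := Quot.ind fun y => congrArg (Quot.mk _) (by simp)
  mul_smul g h := Quot.ind fun y => congrArg (Quot.mk _) (by simp [mul_smul])

namespace XbarSet

variable (F) in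
def point : XbarSet F := Sum.inr ()

lemma actXbar_point (g : GL (Fin 2) F) : actXbar g (point F) = point F := rfl

variable [DecidableEq F]

def pair (x y : OnePoint F) (h : x ≠ y) : XbarSet F :=
  Sum.inl ⟨s(equivProjectivization F x, equivProjectivization F y), by simpa using h⟩

lemma pair_comm {x y : OnePoint F} (h : x ≠ y) : pair y x h.symm = pair x y h :=
  congrArg Sum.inl (Subtype.ext Sym2.eq_swap)

@[elab_as_elim]
lemma ind {motive : XbarSet F → Prop} (point : motive (point F))
    (pair : ∀ x y h, motive (pair x y h)) (z : XbarSet F) : motive z := by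
  rcases z with ⟨z, hz⟩ | ⟨⟩
  · induction z using Sym2.ind with
    | _ a b =>
      obtain ⟨x, rfl⟩ := (equivProjectivization F).surjective a
      obtain ⟨y, rfl⟩ := (equivProjectivization F).surjective b
      exact pair x y (by simpa using hz)
  · exact point

lemma actXbar_pair (g : GL (Fin 2) F) {x y : OnePoint F} (h : x ≠ y) :
    actXbar g (pair x y h) = pair (g • x) (g • y) ((MulAction.injective g).ne h) := by
  refine congrArg Sum.inl (Subtype.ext ?_)
  simp [P1.smul_equivProjectivization]

end XbarSet

namespace YbarSet

variable [DecidableEq F'] (σ : F' ≃ₐ[F] F')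

def ofOnePoint (z : OnePoint F') : YbarSet σ := Quot.mk _ (equivProjectivization F' z)

lemma ofOnePoint_map (z : OnePoint F') : ofOnePoint σ (z.map σ) = ofOnePoint σ z :=
  (Quot.sound (r := fun x y => sigmaPt σ x = y) (sigmaPt_equivProjectivization σ z)).symm

@[elab_as_elim]
lemma ind {motive : YbarSet σ → Prop} (mk : ∀ z, motive (ofOnePoint σ z)) (y : YbarSet σ) :
    motive y := by
  induction y using Quot.ind with
  | mk a =>
    obtain ⟨z, rfl⟩ := (equivProjectivization F').surjective a
    exact mk z

lemma actYbar_ofOnePoint (g : GL (Fin 2) F) (z : OnePoint F') :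
    actYbar σ g (ofOnePoint σ z) = ofOnePoint σ (glMap F F' g • z) :=
  congrArg (Quot.mk _) (P1.smul_equivProjectivization _ z)

end YbarSet

namespace TraceGenerator

variable {σ : F' ≃ₐ[F] F'} (t : TraceGenerator σ)

lemma apply_add_mul (u v : F) :
    σ (algebraMap F F' u + algebraMap F F' v * t.δ)
      = algebraMap F F' (u + v * t.s) + algebraMap F F' (-v) * t.δ := by
  simp only [map_add, map_mul, AlgEquiv.commutes, t.apply_δ, map_neg]
  ring

lemma apply_coordEquiv (hdim : Module.finrank F F' = 2) (p : F × F) :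
    σ (coordEquiv hdim t.δ_notMem p)
      = coordEquiv hdim t.δ_notMem (p.1 + p.2 * t.s, -p.2) := by
  rw [coordEquiv_apply, coordEquiv_apply, apply_add_mul]

def pairMap (x y : OnePoint F) : OnePoint F' :=
  x.elim (y.map (algebraMap F F')) fun u =>
    y.elim (algebraMap F F' u : F') fun w =>
      (algebraMap F F' u + algebraMap F F' ((w - u) / t.s) * t.δ : F')

@[simp]
lemma pairMap_infty_left (y : OnePoint F) : t.pairMap ∞ y = y.map (algebraMap F F') := rfl

@[simp]
lemma pairMap_infty_right (x : OnePoint F) : t.pairMap x ∞ = x.map (algebraMap F F') := by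
  cases x <;> rfl

@[simp]
lemma pairMap_coe_coe (u w : F) :
    t.pairMap u w = (algebraMap F F' u + algebraMap F F' ((w - u) / t.s) * t.δ : F') := rfl

lemma apply_pairMap_coe_coe (u w : F) :
    σ (algebraMap F F' u + algebraMap F F' ((w - u) / t.s) * t.δ)
      = algebraMap F F' w + algebraMap F F' ((u - w) / t.s) * t.δ := by
  rw [apply_add_mul]
  congr 3
  · field_simp [t.s_ne_zero]
    ring
  · ring

lemma ofOnePoint_pairMap_comm [DecidableEq F'] (x y : OnePoint F) :
    YbarSet.ofOnePoint σ (t.pairMap y x) = YbarSet.ofOnePoint σ (t.pairMap x y) := by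
  cases x with
  | infty => simp
  | coe u =>
    cases y with
    | infty => simp
    | coe w =>
      rw [← YbarSet.ofOnePoint_map, pairMap_coe_coe, map_some, apply_pairMap_coe_coe,
        pairMap_coe_coe]

lemma pairMap_smul [DecidableEq F] [DecidableEq F'] {g : GL (Fin 2) F} (hg : g 1 0 = 0)
    (x y : OnePoint F) : t.pairMap (g • x) (g • y) = glMap F F' g • t.pairMap x y := by
  have hgx : g • (∞ : OnePoint F) = ∞ := smul_infty_eq_self_iff.2 hg
  cases x with
  | infty => rw [hgx, pairMap_infty_left, pairMap_infty_left, OnePoint.map_smul]; rfl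
  | coe u =>
    cases y with
    | infty => rw [hgx, pairMap_infty_right, pairMap_infty_right, OnePoint.map_smul]; rfl
    | coe w =>
      rw [smul_coe_of_apply_one_zero hg, smul_coe_of_apply_one_zero hg, pairMap_coe_coe,
        pairMap_coe_coe, smul_coe_of_apply_one_zero (by rw [glMap_coe_apply, hg, map_zero])]
      simp only [glMap_coe_apply, coe_eq_coe, map_add, map_mul, map_div₀, map_sub]
      have : algebraMap F F' (g 1 1) ≠ 0 := by simpa using g.apply_one_one_ne_zero hg
      have : algebraMap F F' t.s ≠ 0 := by simpa using t.s_ne_zero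
      field_simp
      ring

variable [DecidableEq F]

def ofCoords (p : F × F) : XbarSet F :=
  if hv : p.2 = 0 then XbarSet.pair ∞ p.1 (infty_ne_coe _)
  else XbarSet.pair p.1 (p.1 + p.2 * t.s) (by simpa [t.s_ne_zero] using hv)

lemma ofCoords_of_eq_zero (u : F) : t.ofCoords (u, 0) = XbarSet.pair ∞ u (infty_ne_coe _) :=
  dif_pos rfl

lemma ofCoords_of_ne_zero {u v : F} (hv : v ≠ 0) :
    t.ofCoords (u, v) = XbarSet.pair u (u + v * t.s) (by simpa [t.s_ne_zero] using hv) :=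
  dif_neg hv

lemma ofCoords_swap (u v : F) : t.ofCoords (u + v * t.s, -v) = t.ofCoords (u, v) := by
  by_cases hv : v = 0
  · simp [hv]
  · rw [ofCoords_of_ne_zero _ (neg_ne_zero.2 hv), ofCoords_of_ne_zero _ hv, ← XbarSet.pair_comm]
    congr 2
    ring

variable [DecidableEq F']

def toYbar : XbarSet F → YbarSet σ :=
  Sum.elim
    (fun z => Sym2.lift ⟨fun a b => YbarSet.ofOnePoint σ
        (t.pairMap ((equivProjectivization F).symm a) ((equivProjectivization F).symm b)),
      fun _ _ => t.ofOnePoint_pairMap_comm _ _⟩ z.1)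
    fun _ => YbarSet.ofOnePoint σ ∞

@[simp]
lemma toYbar_point : t.toYbar (XbarSet.point F) = YbarSet.ofOnePoint σ ∞ := rfl

@[simp]
lemma toYbar_pair {x y : OnePoint F} (h : x ≠ y) :
    t.toYbar (XbarSet.pair x y h) = YbarSet.ofOnePoint σ (t.pairMap x y) := by
  simp [toYbar, XbarSet.pair]

lemma toYbar_actXbar {g : GL (Fin 2) F} (hg : g 1 0 = 0) (x : XbarSet F) :
    t.toYbar (actXbar g x) = actYbar σ g (t.toYbar x) := by
  induction x using XbarSet.ind with
  | point =>
    rw [XbarSet.actXbar_point, toYbar_point, YbarSet.actYbar_ofOnePoint, glMap_smul_infty hg]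
  | pair x y h =>
    rw [XbarSet.actXbar_pair, toYbar_pair, toYbar_pair, t.pairMap_smul hg,
      YbarSet.actYbar_ofOnePoint]

variable (hdim : Module.finrank F F' = 2)

def toXbarPoint (y : P1 F') : XbarSet F :=
  ((equivProjectivization F').symm y).elim (XbarSet.point F) fun z =>
    t.ofCoords ((coordEquiv hdim t.δ_notMem).symm z)

lemma toXbarPoint_infty :
    t.toXbarPoint hdim (equivProjectivization F' ∞) = XbarSet.point F := by
  simp only [toXbarPoint, Equiv.symm_apply_apply]
  rfl

lemma toXbarPoint_coordEquiv (p : F × F) :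
    t.toXbarPoint hdim (equivProjectivization F' (coordEquiv hdim t.δ_notMem p))
      = t.ofCoords p := by
  simp only [toXbarPoint, Equiv.symm_apply_apply]
  exact congrArg t.ofCoords ((coordEquiv hdim t.δ_notMem).symm_apply_apply p)

lemma toXbarPoint_sigmaPt (y : P1 F') :
    t.toXbarPoint hdim (sigmaPt σ y) = t.toXbarPoint hdim y := by
  obtain ⟨z, rfl⟩ := (equivProjectivization F').surjective y
  rw [sigmaPt_equivProjectivization]
  cases z with
  | infty => rfl
  | coe z =>
    obtain ⟨⟨u, v⟩, rfl⟩ := (coordEquiv hdim t.δ_notMem).surjective z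
    rw [map_some, apply_coordEquiv, toXbarPoint_coordEquiv, toXbarPoint_coordEquiv,
      ofCoords_swap]

def toXbar : YbarSet σ → XbarSet F :=
  Quot.lift (t.toXbarPoint hdim) fun a _ hab => hab ▸ (t.toXbarPoint_sigmaPt hdim a).symm

lemma toXbar_ofOnePoint (z : OnePoint F') :
    t.toXbar hdim (YbarSet.ofOnePoint σ z) = t.toXbarPoint hdim (equivProjectivization F' z) :=
  rfl

lemma toXbar_toYbar (x : XbarSet F) : t.toXbar hdim (t.toYbar x) = x := by
  have hrat (u : F) : (algebraMap F F' u : OnePoint F') =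
      (coordEquiv hdim t.δ_notMem (u, 0) : OnePoint F') := by
    simp [coordEquiv_apply]
  induction x using XbarSet.ind with
  | point => rw [toYbar_point, toXbar_ofOnePoint, toXbarPoint_infty]
  | pair x y h =>
    rw [toYbar_pair, toXbar_ofOnePoint]
    cases x with
    | infty =>
      cases y with
      | infty => exact absurd rfl h
      | coe w =>
        rw [pairMap_infty_left, map_some, hrat, toXbarPoint_coordEquiv, ofCoords_of_eq_zero]
    | coe u =>
      cases y with
      | infty =>
        rw [pairMap_infty_right, map_some, hrat, toXbarPoint_coordEquiv, ofCoords_of_eq_zero,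
          XbarSet.pair_comm]
      | coe w =>
        have huw : u ≠ w := fun huw => h (congrArg _ huw)
        have hv : (w - u) / t.s ≠ 0 := div_ne_zero (sub_ne_zero.2 huw.symm) t.s_ne_zero
        rw [pairMap_coe_coe, ← coordEquiv_apply hdim t.δ_notMem (u, (w - u) / t.s),
          toXbarPoint_coordEquiv, ofCoords_of_ne_zero _ hv]
        congr 2
        field_simp [t.s_ne_zero]
        ring

lemma toYbar_toXbar (y : YbarSet σ) : t.toYbar (t.toXbar hdim y) = y := by
  induction y using YbarSet.ind with
  | mk z =>
    rw [toXbar_ofOnePoint]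
    cases z with
    | infty => rw [toXbarPoint_infty, toYbar_point]
    | coe z =>
      obtain ⟨⟨u, v⟩, rfl⟩ := (coordEquiv hdim t.δ_notMem).surjective z
      rw [toXbarPoint_coordEquiv, coordEquiv_apply]
      by_cases hv : v = 0
      · simp [hv, ofCoords_of_eq_zero]
      · rw [ofCoords_of_ne_zero _ hv, toYbar_pair, pairMap_coe_coe, add_sub_cancel_left,
          mul_div_cancel_right₀ _ t.s_ne_zero]

def equiv : XbarSet F ≃ YbarSet σ where
  toFun := t.toYbar
  invFun := t.toXbar hdim
  left_inv := t.toXbar_toYbar hdim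
  right_inv := t.toYbar_toXbar hdim

lemma equiv_smul {b : GL (Fin 2) F} (hb : b ∈ Bsub F (equivProjectivization F ∞))
    (x : XbarSet F) : t.equiv hdim (b • x) = b • t.equiv hdim x :=
  t.toYbar_actXbar (P1.smul_equivProjectivization_infty_eq_self_iff.1 hb) x

end TraceGenerator

end Bar

theorem statement7_general {F : Type*} [Field F] {F' : Type*} [Field F'] [Algebra F F']
    (hdim : Module.finrank F F' = 2)
    (σ : F' ≃ₐ[F] F') (hσ : σ ≠ (AlgEquiv.refl : F' ≃ₐ[F] F'))
    (xoo : P1 F) :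
    ∃ f : XbarSet F ≃ YbarSet σ,
      ∀ b ∈ Bsub F xoo, ∀ x, f (actXbar b x) = actYbar σ b (f x) := by
  classical
  obtain ⟨t⟩ := TraceGenerator.nonempty hdim hσ
  obtain ⟨g, hg⟩ := OnePoint.exists_smul_infty_eq ((equivProjectivization F).symm xoo)
  have hxoo : g • equivProjectivization F ∞ = xoo := by
    rw [P1.smul_equivProjectivization, hg, Equiv.apply_symm_apply]
  obtain ⟨f, hf⟩ :=
    MulAction.exists_equiv_smul_of_stabilizer (fun b hb => t.equiv_smul hdim hb) g
  exact ⟨f, hxoo ▸ hf⟩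

/-- The `G`-sets `X̄` (unordered pairs of distinct points of `ℙ¹(F)`, plus a
point) and `Ȳ = ℙ¹(F')/⟨σ⟩` are isomorphic as `B`-sets. -/
theorem statement7 {F : Type*} [Field F] [Fintype F] {F' : Type*} [Field F'] [Algebra F F']
    (hdim : Module.finrank F F' = 2)
    (σ : F' ≃ₐ[F] F') (hσ : σ ≠ (AlgEquiv.refl : F' ≃ₐ[F] F'))
    (xoo : P1 F) :
    ∃ f : XbarSet F ≃ YbarSet σ,
      ∀ b ∈ Bsub F xoo, ∀ x, f (actXbar b x) = actYbar σ b (f x) :=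
  statement7_general hdim σ hσ xoo

end
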